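/- arXiv:2404.12116 — 10 statements merged into one kernel-verified Lean document; each statement's English description precedes it below -/
import Mathlib

section
/- Let S be a multiplicative set of a ring R and let a := ass_l(S) = {r ∈ R | sr = 0 for some s ∈ S}. Then S is a left Ore set of R if and only if both of the following hold: (i) for every left ideal L of R with L ⊄ a and every s ∈ S, L ∩ Rs ≠ {0}; and (ii) for every s ∈ S and every r ∈ R \ a, S ∩ (Rs : r) ≠ ∅ (i.e. there exists s' ∈ S with s'r ∈ Rs). -/
section OreCondition

variable {R : Type*}

theorem exists_mul_eq_mul_of_mul_eq_zero [MulZeroClass R] {S : Set R} {t r : R}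
    (ht : t ∈ S) (htr : t * r = 0) (s : R) : ∃ s' ∈ S, ∃ r' : R, s' * r = r' * s :=
  ⟨t, ht, 0, by rw [htr, zero_mul]⟩

theorem exists_ne_zero_mem_mul_right_of_mul_eq_mul [Ring R] {L : Submodule R R}
    {r s s' r' : R} (hrL : r ∈ L) (hr : s' * r ≠ 0) (heq : s' * r = r' * s) :
    ∃ x : R, x ≠ 0 ∧ x ∈ L ∧ ∃ r'' : R, x = r'' * s :=
  ⟨r' * s, heq ▸ hr, heq ▸ L.smul_mem s' hrL, r', rfl⟩

end OreCondition

theorem stmt1_general {R : Type*} [Ring R] (S : Set R) :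
    (∀ r : R, ∀ s ∈ S, ∃ s' ∈ S, ∃ r' : R, s' * r = r' * s) ↔
    ((∀ L : Submodule R R, ¬ ((L : Set R) ⊆ {r : R | ∃ s ∈ S, s * r = 0}) →
        ∀ s ∈ S, ∃ x : R, x ≠ 0 ∧ x ∈ L ∧ ∃ r' : R, x = r' * s) ∧
      (∀ s ∈ S, ∀ r : R, r ∉ {r : R | ∃ t ∈ S, t * r = 0} →
        ∃ s' ∈ S, ∃ r' : R, s' * r = r' * s)) := by
  constructor
  · intro hore
    refine ⟨fun L hL s hs => ?_, fun s hs r _ => hore r s hs⟩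
    obtain ⟨r, hrL, hra⟩ := Set.not_subset.mp hL
    obtain ⟨s', hs', r', heq⟩ := hore r s hs
    exact exists_ne_zero_mem_mul_right_of_mul_eq_mul hrL (fun h => hra ⟨s', hs', h⟩) heq
  · rintro ⟨-, hii⟩ r s hs
    by_cases hra : r ∈ {r : R | ∃ t ∈ S, t * r = 0}
    · obtain ⟨t, ht, htr⟩ := hra
      exact exists_mul_eq_mul_of_mul_eq_zero ht htr s
    · exact hii s hs r hra

/-- Let `S` be a multiplicative set of a ring `R` and let
`a := assₗ(S) = {r ∈ R | s * r = 0 for some s ∈ S}`. Then `S` is a left Ore set of `R`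
iff (i) for every left ideal `L` of `R` with `L ⊄ a` and every `s ∈ S`, `L ∩ Rs ≠ {0}`;
and (ii) for every `s ∈ S` and every `r ∈ R \ a`, `S ∩ (Rs : r) ≠ ∅`. -/
theorem stmt1 {R : Type*} [Ring R] (S : Set R)
    (hone : (1 : R) ∈ S) (hmul : ∀ a ∈ S, ∀ b ∈ S, a * b ∈ S) (hzero : (0 : R) ∉ S) :
    (∀ r : R, ∀ s ∈ S, ∃ s' ∈ S, ∃ r' : R, s' * r = r' * s) ↔
    ((∀ L : Submodule R R, ¬ ((L : Set R) ⊆ {r : R | ∃ s ∈ S, s * r = 0}) →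
        ∀ s ∈ S, ∃ x : R, x ≠ 0 ∧ x ∈ L ∧ ∃ r' : R, x = r' * s) ∧
      (∀ s ∈ S, ∀ r : R, r ∉ {r : R | ∃ t ∈ S, t * r = 0} →
        ∃ s' ∈ S, ∃ r' : R, s' * r = r' * s)) :=
  stmt1_general S
end

section
/- Let S be a multiplicative set of a ring R such that every element of S is regular (neither a left nor a right zero divisor). Then S is a left Ore set of R if and only if Rs is an essential left ideal of R for every s ∈ S and S ∩ (Rs : r) ≠ ∅ for every s ∈ S and r ∈ R. Moreover, if these conditions hold then (Rs : r) is an essential left ideal of R for all r ∈ R and s ∈ S. -/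
/-! Writing membership in `Rs` as `x = r' * s`, the Ore condition `s' * r = r' * s` says exactly
that some `s' ∈ S` lies in `(Rs : r)`. Given a nonzero `y` in a left ideal `J`, the Ore condition
applied to `y * r` yields `s' ∈ S` with `s' * y ∈ (Rs : r) ∩ J`, and `s' * y ≠ 0` because `s'` is
not a left zero divisor; taking `r = 1` shows that `Rs` is essential. -/

namespace Submodule

variable {R : Type*} [Ring R] {S : Set R}

theorem leftOre_iff_exists_mul_mem_span_singleton :
    (∀ r : R, ∀ s ∈ S, ∃ s' ∈ S, ∃ r' : R, s' * r = r' * s) ↔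
      ∀ s ∈ S, ∀ r : R, ∃ s' ∈ S, s' * r ∈ span R {s} := by
  simp only [mem_span_singleton, smul_eq_mul, eq_comm]
  exact ⟨fun h s hs r => h r s hs, fun h r s hs => h s hs r⟩

theorem exists_ne_zero_mem_mul_mem_span_singleton (hS : S ⊆ nonZeroDivisorsLeft R)
    (hore : ∀ s ∈ S, ∀ r : R, ∃ s' ∈ S, s' * r ∈ span R {s}) {s : R} (hs : s ∈ S) (r : R)
    {J : Submodule R R} (hJ : J ≠ ⊥) : ∃ x : R, x ≠ 0 ∧ x ∈ J ∧ x * r ∈ span R {s} := by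
  obtain ⟨y, hyJ, hy⟩ := (Submodule.ne_bot_iff J).mp hJ
  obtain ⟨s', hs', hmem⟩ := hore s hs (y * r)
  refine ⟨s' * y, fun h => hy (hS hs' y h), J.smul_mem s' hyJ, ?_⟩
  rwa [← mul_assoc] at hmem

theorem span_singleton_inf_ne_bot_of_leftOre (hS : S ⊆ nonZeroDivisorsLeft R)
    (hore : ∀ s ∈ S, ∀ r : R, ∃ s' ∈ S, s' * r ∈ span R {s}) {s : R} (hs : s ∈ S)
    {J : Submodule R R} (hJ : J ≠ ⊥) : span R {s} ⊓ J ≠ ⊥ := by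
  obtain ⟨x, hx, hxJ, hxs⟩ := exists_ne_zero_mem_mul_mem_span_singleton hS hore hs 1 hJ
  rw [mul_one] at hxs
  exact (Submodule.ne_bot_iff _).mpr ⟨x, ⟨hxs, hxJ⟩, hx⟩

end Submodule

open Submodule in
theorem stmt2_general {R : Type*} [Ring R] (S : Set R)
    (hreg : ∀ s ∈ S, (∀ r : R, r * s = 0 → r = 0) ∧ (∀ r : R, s * r = 0 → r = 0)) :
    ((∀ r : R, ∀ s ∈ S, ∃ s' ∈ S, ∃ r' : R, s' * r = r' * s) ↔
      ((∀ s ∈ S, ∀ J : Submodule R R, J ≠ ⊥ → Submodule.span R {s} ⊓ J ≠ ⊥) ∧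
        (∀ s ∈ S, ∀ r : R, ∃ s' ∈ S, s' * r ∈ Submodule.span R {s}))) ∧
    (((∀ s ∈ S, ∀ J : Submodule R R, J ≠ ⊥ → Submodule.span R {s} ⊓ J ≠ ⊥) ∧
        (∀ s ∈ S, ∀ r : R, ∃ s' ∈ S, s' * r ∈ Submodule.span R {s})) →
      ∀ s ∈ S, ∀ r : R, ∀ J : Submodule R R, J ≠ ⊥ →
        ∃ x : R, x ≠ 0 ∧ x ∈ J ∧ x * r ∈ Submodule.span R {s}) := by
  have hS : S ⊆ nonZeroDivisorsLeft R := fun s hs => (hreg s hs).2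
  rw [leftOre_iff_exists_mul_mem_span_singleton]
  refine ⟨⟨fun hore => ⟨?_, hore⟩, And.right⟩, ?_⟩
  · exact fun s hs J hJ => span_singleton_inf_ne_bot_of_leftOre hS hore hs hJ
  · exact fun ⟨_, hore⟩ s hs r J hJ => exists_ne_zero_mem_mul_mem_span_singleton hS hore hs r hJ

/-- Let `S` be a multiplicative set of a ring `R` consisting of regular
elements. Then `S` is a left Ore set of `R` iff `Rs` is an essential left ideal of `R` for
every `s ∈ S` and `S ∩ (Rs : r) ≠ ∅` for all `s ∈ S`, `r ∈ R`. Moreover, if these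
conditions hold then `(Rs : r)` is an essential left ideal of `R` for all `r ∈ R`, `s ∈ S`.
Left ideals are submodules of `R` as a left module over itself; `Rs = span R {s}`;
a left ideal `L` is essential if `L ⊓ J ≠ ⊥` for every nonzero left ideal `J`. -/
theorem stmt2 {R : Type*} [Ring R] (S : Set R)
    (hone : (1 : R) ∈ S) (hmul : ∀ a ∈ S, ∀ b ∈ S, a * b ∈ S) (hzero : (0 : R) ∉ S)
    (hreg : ∀ s ∈ S, (∀ r : R, r * s = 0 → r = 0) ∧ (∀ r : R, s * r = 0 → r = 0)) :
    ((∀ r : R, ∀ s ∈ S, ∃ s' ∈ S, ∃ r' : R, s' * r = r' * s) ↔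
      ((∀ s ∈ S, ∀ J : Submodule R R, J ≠ ⊥ → Submodule.span R {s} ⊓ J ≠ ⊥) ∧
        (∀ s ∈ S, ∀ r : R, ∃ s' ∈ S, s' * r ∈ Submodule.span R {s}))) ∧
    (((∀ s ∈ S, ∀ J : Submodule R R, J ≠ ⊥ → Submodule.span R {s} ⊓ J ≠ ⊥) ∧
        (∀ s ∈ S, ∀ r : R, ∃ s' ∈ S, s' * r ∈ Submodule.span R {s})) →
      ∀ s ∈ S, ∀ r : R, ∀ J : Submodule R R, J ≠ ⊥ →
        ∃ x : R, x ≠ 0 ∧ x ∈ J ∧ x * r ∈ Submodule.span R {s}) :=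
  stmt2_general S hreg
end

section
/- Let S be a multiplicative set of a ring R such that: (A) for every s ∈ S, the left ideal Rs is an essential left ideal of R; and (B) for every essential left ideal L of R, S ∩ L ≠ ∅. Then S is a left Ore set of R. -/
/-!
For `r : R` and `s ∈ S`, the left ideal `L = {x | x * r ∈ R s}` is the preimage of `R s` under
right multiplication by `r`. Preimages of essential submodules under linear maps are essential,
so `L` is essential by (A), and by (B) it contains some `s' ∈ S`, i.e. `s' * r = r' * s`.
-/

namespace Submodule

variable {R M N : Type*} [Ring R] [AddCommGroup M] [Module R M] [AddCommGroup N] [Module R N]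

def IsEssential (P : Submodule R M) : Prop :=
  ∀ J : Submodule R M, J ≠ ⊥ → P ⊓ J ≠ ⊥

theorem IsEssential.comap {P : Submodule R N} (hP : P.IsEssential) (f : M →ₗ[R] N) :
    (P.comap f).IsEssential := by
  intro J hJ hmeet
  have hJf : J.map f = ⊥ := by
    by_contra hne
    apply hP _ hne
    rw [inf_comm, map_inf_eq_map_inf_comap, inf_comm, hmeet, map_bot]
  have hJle : J ≤ P.comap f := (LinearMap.le_ker_iff_map.mpr hJf).trans (LinearMap.ker_le_comap f)
  exact hJ (by rwa [inf_eq_right.mpr hJle] at hmeet)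

theorem mem_comap_toSpanSingleton_span_singleton {r s x : R} :
    x ∈ (span R {s}).comap (LinearMap.toSpanSingleton R R r) ↔ ∃ r' : R, x * r = r' * s := by
  simp only [mem_comap, LinearMap.toSpanSingleton_apply, mem_span_singleton, smul_eq_mul, eq_comm]

end Submodule

theorem stmt3_general {R : Type*} [Ring R] (S : Set R)
    (hA : ∀ s ∈ S, ∀ J : Submodule R R, J ≠ ⊥ → Submodule.span R {s} ⊓ J ≠ ⊥)
    (hB : ∀ L : Submodule R R, (∀ J : Submodule R R, J ≠ ⊥ → L ⊓ J ≠ ⊥) → ∃ s ∈ S, s ∈ L) :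
    ∀ r : R, ∀ s ∈ S, ∃ s' ∈ S, ∃ r' : R, s' * r = r' * s := by
  intro r s hs
  have hL : ((Submodule.span R {s}).comap (LinearMap.toSpanSingleton R R r)).IsEssential :=
    Submodule.IsEssential.comap (hA s hs) _
  obtain ⟨s', hs'S, hs'L⟩ := hB _ hL
  exact ⟨s', hs'S, Submodule.mem_comap_toSpanSingleton_span_singleton.mp hs'L⟩

/-- Let `S` be a multiplicative set of a ring `R` such that
(A) `Rs` is an essential left ideal for every `s ∈ S`, and
(B) `S` meets every essential left ideal of `R`.
Then `S` is a left Ore set of `R`, i.e. for all `r ∈ R` and `s ∈ S` there exist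
`s' ∈ S` and `r' ∈ R` with `s' * r = r' * s`. -/
theorem stmt3 {R : Type*} [Ring R] (S : Set R)
    (hone : (1 : R) ∈ S) (hmul : ∀ a ∈ S, ∀ b ∈ S, a * b ∈ S) (hzero : (0 : R) ∉ S)
    (hA : ∀ s ∈ S, ∀ J : Submodule R R, J ≠ ⊥ → Submodule.span R {s} ⊓ J ≠ ⊥)
    (hB : ∀ L : Submodule R R, (∀ J : Submodule R R, J ≠ ⊥ → L ⊓ J ≠ ⊥) → ∃ s ∈ S, s ∈ L) :
    ∀ r : R, ∀ s ∈ S, ∃ s' ∈ S, ∃ r' : R, s' * r = r' * s :=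
  stmt3_general S hA hB
end

section
/- Let S be a multiplicative set of a ring R. Then S contains a largest left Ore set of R: there exists a left Ore set S^{lO} of R with S^{lO} ⊆ S such that every left Ore set T of R with T ⊆ S satisfies T ⊆ S^{lO}. -/
/-!
The left Ore sets contained in `S` generate a submonoid `T`, which lies in `S` because `S` is
multiplicative. It is again a left Ore set: for a submonoid `N`, the elements `s` such that every
`r` admits `s' ∈ N` and `r'` with `s' * r = r' * s` form a submonoid (from `s₁ * r = r₁ * b` and
`s₂ * r₁ = r₂ * a` one gets `(s₂ * s₁) * r = r₂ * (a * b)`), and every generator of `T` belongs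
to it for `N = T`.
-/

/-- A left Ore set of a ring `R`: a multiplicative set (`1 ∈ S`, `S·S ⊆ S`, `0 ∉ S`)
satisfying the left Ore condition. -/
def IsLeftOreSet {R : Type*} [Ring R] (S : Set R) : Prop :=
  (1 : R) ∈ S ∧ (∀ a ∈ S, ∀ b ∈ S, a * b ∈ S) ∧ (0 : R) ∉ S ∧
  ∀ r : R, ∀ s ∈ S, ∃ s' ∈ S, ∃ r' : R, s' * r = r' * s

namespace Submonoid

variable {M : Type*} [Monoid M]

def leftOreLocus (N : Submonoid M) : Submonoid M where
  carrier := {s | ∀ r : M, ∃ s' ∈ N, ∃ r' : M, s' * r = r' * s}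
  one_mem' r := ⟨1, N.one_mem, r, by rw [one_mul, mul_one]⟩
  mul_mem' {a b} ha hb r := by
    obtain ⟨s₁, hs₁, r₁, h₁⟩ := hb r
    obtain ⟨s₂, hs₂, r₂, h₂⟩ := ha r₁
    exact ⟨s₂ * s₁, N.mul_mem hs₂ hs₁, r₂, by rw [mul_assoc, h₁, ← mul_assoc, h₂, mul_assoc]⟩

theorem closure_le_leftOreLocus_closure {U : Set M}
    (hU : ∀ s ∈ U, ∀ r : M, ∃ s' ∈ U, ∃ r' : M, s' * r = r' * s) :
    closure U ≤ (closure U).leftOreLocus :=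
  closure_le.2 fun s hs r =>
    let ⟨s', hs', r', h⟩ := hU s hs r
    ⟨s', subset_closure hs', r', h⟩

end Submonoid

theorem isLeftOreSet_of_le_leftOreLocus {R : Type*} [Ring R] {N : Submonoid R}
    (hzero : (0 : R) ∉ N) (hN : N ≤ N.leftOreLocus) : IsLeftOreSet (N : Set R) :=
  ⟨N.one_mem, fun _ ha _ hb => N.mul_mem ha hb, hzero, fun r _ hs => hN hs r⟩

/-- Every multiplicative set `S` of a ring `R` contains a largest
left Ore set of `R`. -/
theorem stmt7 {R : Type*} [Ring R] (S : Set R)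
    (hone : (1 : R) ∈ S) (hmul : ∀ a ∈ S, ∀ b ∈ S, a * b ∈ S) (hzero : (0 : R) ∉ S) :
    ∃ T : Set R, T ⊆ S ∧ IsLeftOreSet T ∧
      ∀ T' : Set R, T' ⊆ S → IsLeftOreSet T' → T' ⊆ T := by
  let S' : Submonoid R := ⟨⟨S, fun {a b} ha hb => hmul a ha b hb⟩, hone⟩
  let U : Set R := ⋃₀ {T' : Set R | T' ⊆ S ∧ IsLeftOreSet T'}
  have hTS : (Submonoid.closure U : Set R) ⊆ S :=
    Submonoid.closure_le (S := S').2 fun _ ⟨_, hT', hx⟩ => hT'.1 hx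
  have hUOre : ∀ s ∈ U, ∀ r : R, ∃ s' ∈ U, ∃ r' : R, s' * r = r' * s := by
    rintro s ⟨T', hT', hs⟩ r
    obtain ⟨s', hs', r', h⟩ := hT'.2.2.2.2 r s hs
    exact ⟨s', ⟨T', hT', hs'⟩, r', h⟩
  refine ⟨Submonoid.closure U, hTS,
    isLeftOreSet_of_le_leftOreLocus (fun h => hzero (hTS h))
      (Submonoid.closure_le_leftOreLocus_closure hUOre),
    fun T' hT'S hT' _ hx => Submonoid.subset_closure ⟨T', ⟨hT'S, hT'⟩, hx⟩⟩
end

section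
/- Let S be a multiplicative set of a ring R. Then S contains a largest left denominator set of R: there exists a left denominator set S^{ld} of R with S^{ld} ⊆ S such that every left denominator set T of R with T ⊆ S satisfies T ⊆ S^{ld}. -/
/-- A left denominator set of a ring `R`: a multiplicative set (`1 ∈ S`, `S·S ⊆ S`,
`0 ∉ S`) satisfying the left Ore condition and such that `r * s = 0` with `s ∈ S`
implies `t * r = 0` for some `t ∈ S`. -/
def IsLeftDenominatorSet {R : Type*} [Ring R] (S : Set R) : Prop :=
  (1 : R) ∈ S ∧ (∀ a ∈ S, ∀ b ∈ S, a * b ∈ S) ∧ (0 : R) ∉ S ∧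
  (∀ r : R, ∀ s ∈ S, ∃ s' ∈ S, ∃ r' : R, s' * r = r' * s) ∧
  (∀ r : R, ∀ s ∈ S, r * s = 0 → ∃ t ∈ S, t * r = 0)

/-! The largest one is the submonoid generated by the union of all left denominator sets
contained in `S`; it stays inside `S` because `S` is multiplicative. For a fixed submonoid `T`,
the denominators `s` satisfying the Ore condition relative to `T` (`s' * r = r' * s` with
`s' ∈ T`), and likewise those satisfying the annihilator condition, form a submonoid; so both
conditions pass from the generators to the generated submonoid. -/

namespace IsLeftDenominatorSet

variable {R : Type*} [Ring R]

def leftOreSubmonoid (T : Submonoid R) : Submonoid R where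
  carrier := {s | ∀ r : R, ∃ s' ∈ T, ∃ r' : R, s' * r = r' * s}
  one_mem' r := ⟨1, T.one_mem, r, by simp⟩
  mul_mem' {a b} ha hb r := by
    obtain ⟨s₂, hs₂, r₂, h₂⟩ := hb r
    obtain ⟨s₁, hs₁, r₁, h₁⟩ := ha r₂
    exact ⟨s₁ * s₂, T.mul_mem hs₁ hs₂, r₁, by rw [mul_assoc, h₂, ← mul_assoc, h₁, mul_assoc]⟩

def leftAnnihilatorSubmonoid (T : Submonoid R) : Submonoid R where
  carrier := {s | ∀ r : R, r * s = 0 → ∃ t ∈ T, t * r = 0}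
  one_mem' r hr := ⟨1, T.one_mem, by simpa using hr⟩
  mul_mem' {a b} ha hb r hr := by
    obtain ⟨t₂, ht₂, h₂⟩ := hb (r * a) (by rwa [mul_assoc])
    obtain ⟨t₁, ht₁, h₁⟩ := ha (t₂ * r) (by rwa [mul_assoc])
    exact ⟨t₁ * t₂, T.mul_mem ht₁ ht₂, by rwa [mul_assoc]⟩

theorem subset_leftOreSubmonoid {T' : Set R} (hT' : IsLeftDenominatorSet T') {T : Submonoid R}
    (hle : T' ⊆ T) : T' ⊆ leftOreSubmonoid T := fun s hs r ↦ by
  obtain ⟨s', hs', r', h⟩ := hT'.2.2.2.1 r s hs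
  exact ⟨s', hle hs', r', h⟩

theorem subset_leftAnnihilatorSubmonoid {T' : Set R} (hT' : IsLeftDenominatorSet T')
    {T : Submonoid R} (hle : T' ⊆ T) : T' ⊆ leftAnnihilatorSubmonoid T := fun s hs r hr ↦ by
  obtain ⟨t, ht, h⟩ := hT'.2.2.2.2 r s hs hr
  exact ⟨t, hle ht, h⟩

theorem of_submonoid {T : Submonoid R} (h0 : (0 : R) ∉ T) (hOre : T ≤ leftOreSubmonoid T)
    (hAnn : T ≤ leftAnnihilatorSubmonoid T) : IsLeftDenominatorSet (T : Set R) :=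
  ⟨T.one_mem, fun _ ha _ hb ↦ T.mul_mem ha hb, h0, fun r _ hs ↦ hOre hs r,
    fun r _ hs ↦ hAnn hs r⟩

theorem closure_sUnion {𝒯 : Set (Set R)} (h𝒯 : ∀ T' ∈ 𝒯, IsLeftDenominatorSet T')
    (h0 : (0 : R) ∉ Submonoid.closure (⋃₀ 𝒯)) :
    IsLeftDenominatorSet (Submonoid.closure (⋃₀ 𝒯) : Set R) := by
  have hle : ∀ T' ∈ 𝒯, T' ⊆ Submonoid.closure (⋃₀ 𝒯) := fun T' hT' ↦
    (Set.subset_sUnion_of_mem hT').trans Submonoid.subset_closure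
  refine of_submonoid h0 ?_ ?_ <;> refine Submonoid.closure_le.mpr (Set.sUnion_subset ?_)
  · exact fun T' hT' ↦ subset_leftOreSubmonoid (h𝒯 T' hT') (hle T' hT')
  · exact fun T' hT' ↦ subset_leftAnnihilatorSubmonoid (h𝒯 T' hT') (hle T' hT')

end IsLeftDenominatorSet

/-- Every multiplicative set `S` of a ring `R` contains a largest
left denominator set of `R`. -/
theorem stmt8 {R : Type*} [Ring R] (S : Set R)
    (hone : (1 : R) ∈ S) (hmul : ∀ a ∈ S, ∀ b ∈ S, a * b ∈ S) (hzero : (0 : R) ∉ S) :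
    ∃ T : Set R, T ⊆ S ∧ IsLeftDenominatorSet T ∧
      ∀ T' : Set R, T' ⊆ S → IsLeftDenominatorSet T' → T' ⊆ T := by
  let M : Submonoid R := ⟨⟨S, fun {a b} ha hb ↦ hmul a ha b hb⟩, hone⟩
  let 𝒯 : Set (Set R) := {T' | T' ⊆ S ∧ IsLeftDenominatorSet T'}
  have hsub : (Submonoid.closure (⋃₀ 𝒯) : Set R) ⊆ S :=
    Submonoid.closure_le (S := M).mpr (Set.sUnion_subset fun _ hT' ↦ hT'.1)
  refine ⟨Submonoid.closure (⋃₀ 𝒯), hsub, ?_, fun T' hT'S hT' ↦ ?_⟩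
  · exact IsLeftDenominatorSet.closure_sUnion (fun _ hT' ↦ hT'.2) fun h ↦ hzero (hsub h)
  · exact (Set.subset_sUnion_of_mem (show T' ∈ 𝒯 from ⟨hT'S, hT'⟩)).trans
      Submonoid.subset_closure
end

section
/- Let R be a ring, a an ideal of R, and π : R → R̄ := R/a the canonical projection. Let b̄ be an ideal of R̄ and b := π⁻¹(b̄). Let S̄ be a multiplicative set of R̄ and S := π⁻¹(S̄). If S̄ is a left Ore set of R̄ with ass_l(S̄) = b̄, and ass_l(S) = b, then S is a left Ore set of R with ass_l(S) = b. -/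
/-! Lift an Ore equation `s̄' r̄ = r̄' s̄` from `R̄` to `R`: the defect `s' r - r' s` lies in
`ker π ⊆ π⁻¹(b̄) = assₗ(S)`, so some `t ∈ S` kills it, and `(t s') r = (t r') s`. -/

section LeftOre

variable {R R' : Type*} [Ring R] [Ring R']

def IsLeftOreCondition (S : Set R) : Prop :=
  ∀ r : R, ∀ s ∈ S, ∃ s' ∈ S, ∃ r' : R, s' * r = r' * s

theorem isLeftOreCondition_preimage (f : R →+* R') (hf : Function.Surjective f) {S : Set R'}
    (hmul : ∀ a ∈ S, ∀ b ∈ S, a * b ∈ S) (hS : IsLeftOreCondition S)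
    (hker : ∀ x, f x = 0 → ∃ t ∈ f ⁻¹' S, t * x = 0) :
    IsLeftOreCondition (f ⁻¹' S) := by
  intro r s hs
  obtain ⟨s₀, hs₀, r₀, hOre⟩ := hS (f r) (f s) hs
  obtain ⟨s', rfl⟩ := hf s₀
  obtain ⟨r', rfl⟩ := hf r₀
  obtain ⟨t, ht, hkill⟩ := hker (s' * r - r' * s) (by simp [hOre])
  refine ⟨t * s', by simpa using hmul _ ht _ hs₀, t * r', ?_⟩
  rw [mul_sub, sub_eq_zero] at hkill
  simpa only [mul_assoc] using hkill

end LeftOre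

theorem stmt11_general {R Rbar : Type*} [Ring R] [Ring Rbar]
    (π : R →+* Rbar) (hπ : Function.Surjective π)
    (bbar : Set Rbar)
    (hb0 : (0 : Rbar) ∈ bbar)
    (Sbar : Set Rbar)
    (hone : (1 : Rbar) ∈ Sbar) (hmul : ∀ a ∈ Sbar, ∀ b ∈ Sbar, a * b ∈ Sbar)
    (hzero : (0 : Rbar) ∉ Sbar)
    (hOre : ∀ r : Rbar, ∀ s ∈ Sbar, ∃ s' ∈ Sbar, ∃ r' : Rbar, s' * r = r' * s)
    (hass : {r : R | ∃ s ∈ π ⁻¹' Sbar, s * r = 0} = π ⁻¹' bbar) :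
    ((1 : R) ∈ π ⁻¹' Sbar ∧ (∀ a ∈ π ⁻¹' Sbar, ∀ b ∈ π ⁻¹' Sbar, a * b ∈ π ⁻¹' Sbar) ∧
      (0 : R) ∉ π ⁻¹' Sbar ∧
      (∀ r : R, ∀ s ∈ π ⁻¹' Sbar, ∃ s' ∈ π ⁻¹' Sbar, ∃ r' : R, s' * r = r' * s)) ∧
    {r : R | ∃ s ∈ π ⁻¹' Sbar, s * r = 0} = π ⁻¹' bbar := by
  have hker : ∀ x, π x = 0 → ∃ t ∈ π ⁻¹' Sbar, t * x = 0 := fun x hx => by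
    have hxb : x ∈ π ⁻¹' bbar := by simpa [Set.mem_preimage, hx] using hb0
    rwa [← hass] at hxb
  refine ⟨⟨by simpa using hone, fun a ha b hb => by simpa using hmul _ ha _ hb,
    by simpa using hzero, isLeftOreCondition_preimage π hπ hmul hOre hker⟩, hass⟩

/-- Let `π : R → R̄ = R/a` be the canonical projection onto a quotient
ring (modelled as a surjective ring homomorphism).  Let `b̄` be a (two-sided) ideal of
`R̄`, `b := π⁻¹(b̄)`, `S̄` a multiplicative set of `R̄` and `S := π⁻¹(S̄)`.  If `S̄` is a
left Ore set of `R̄` with `assₗ(S̄) = b̄`, and `assₗ(S) = b`, then `S` is a left Ore set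
of `R` with `assₗ(S) = b`. -/
theorem stmt11 {R Rbar : Type*} [Ring R] [Ring Rbar]
    (π : R →+* Rbar) (hπ : Function.Surjective π)
    (bbar : Set Rbar)
    (hb0 : (0 : Rbar) ∈ bbar) (hbadd : ∀ x ∈ bbar, ∀ y ∈ bbar, x + y ∈ bbar)
    (hbneg : ∀ x ∈ bbar, -x ∈ bbar)
    (hbl : ∀ r : Rbar, ∀ x ∈ bbar, r * x ∈ bbar)
    (hbr : ∀ r : Rbar, ∀ x ∈ bbar, x * r ∈ bbar)
    (Sbar : Set Rbar)
    (hone : (1 : Rbar) ∈ Sbar) (hmul : ∀ a ∈ Sbar, ∀ b ∈ Sbar, a * b ∈ Sbar)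
    (hzero : (0 : Rbar) ∉ Sbar)
    (hOre : ∀ r : Rbar, ∀ s ∈ Sbar, ∃ s' ∈ Sbar, ∃ r' : Rbar, s' * r = r' * s)
    (hassbar : {r : Rbar | ∃ s ∈ Sbar, s * r = 0} = bbar)
    (hass : {r : R | ∃ s ∈ π ⁻¹' Sbar, s * r = 0} = π ⁻¹' bbar) :
    ((1 : R) ∈ π ⁻¹' Sbar ∧ (∀ a ∈ π ⁻¹' Sbar, ∀ b ∈ π ⁻¹' Sbar, a * b ∈ π ⁻¹' Sbar) ∧
      (0 : R) ∉ π ⁻¹' Sbar ∧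
      (∀ r : R, ∀ s ∈ π ⁻¹' Sbar, ∃ s' ∈ π ⁻¹' Sbar, ∃ r' : R, s' * r = r' * s)) ∧
    {r : R | ∃ s ∈ π ⁻¹' Sbar, s * r = 0} = π ⁻¹' bbar :=
  stmt11_general π hπ bbar hb0 Sbar hone hmul hzero hOre hass
end

section
/- Let R be a ring, a an ideal of R, and π : R → R̄ := R/a the canonical projection. Let b̄ be an ideal of R̄ and b := π⁻¹(b̄). Let S̄ be a multiplicative set of R̄ and S := π⁻¹(S̄). If S̄ is a left denominator set of R̄ with ass_l(S̄) = b̄, and ass_l(S) = b, then S is a left denominator set of R with ass_l(S) = b (in particular ass_r(S) := {r ∈ R | rs = 0 for some s ∈ S} is contained in b). -/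
/-!
Ore condition: lift an Ore relation `s̄' π(r) = r̄' π(s)` from `R̄` to `s₀ r - r₀ s ∈ ker π`. Since
`ker π ⊆ b = assₗ(S)`, some `t ∈ S` kills this difference, and `(t s₀) r = (t r₀) s` is an Ore
relation in `R`. Reversibility: if `r s = 0` with `s ∈ S`, then `π(r) π(s) = 0`, so `π(r) ∈ assₗ(S̄) = b̄`,
i.e. `r ∈ b = assₗ(S)`.
-/

section PreimageOre

variable {R R' : Type*} [Ring R] [Ring R'] {f : R →+* R'} {S' : Set R'}

theorem leftOre_preimage_of_ker_torsion (hf : Function.Surjective f)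
    (hmul : ∀ a ∈ S', ∀ b ∈ S', a * b ∈ S')
    (hOre : ∀ r : R', ∀ s ∈ S', ∃ s' ∈ S', ∃ r' : R', s' * r = r' * s)
    (hker : ∀ x : R, f x = 0 → ∃ t ∈ f ⁻¹' S', t * x = 0)
    (r : R) {s : R} (hs : s ∈ f ⁻¹' S') :
    ∃ s' ∈ f ⁻¹' S', ∃ r' : R, s' * r = r' * s := by
  obtain ⟨s₁, hs₁, r₁, hOre₁⟩ := hOre (f r) (f s) hs
  obtain ⟨s₀, rfl⟩ := hf s₁
  obtain ⟨r₀, rfl⟩ := hf r₁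
  obtain ⟨t, ht, hkill⟩ := hker (s₀ * r - r₀ * s) (by simp [hOre₁])
  refine ⟨t * s₀, by simpa using hmul _ ht _ hs₁, t * r₀, ?_⟩
  rw [mul_sub, sub_eq_zero] at hkill
  simpa only [mul_assoc] using hkill

theorem exists_mul_map_eq_zero_of_mul_eq_zero
    (hden : ∀ r : R', ∀ s ∈ S', r * s = 0 → ∃ t ∈ S', t * r = 0)
    {r s : R} (hs : s ∈ f ⁻¹' S') (hrs : r * s = 0) :
    ∃ t ∈ S', t * f r = 0 :=
  hden (f r) (f s) hs (by rw [← map_mul, hrs, map_zero])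

end PreimageOre

theorem stmt12_general {R Rbar : Type*} [Ring R] [Ring Rbar]
    (π : R →+* Rbar) (hπ : Function.Surjective π)
    (bbar : Set Rbar)
    (hb0 : (0 : Rbar) ∈ bbar)
    (Sbar : Set Rbar)
    (hone : (1 : Rbar) ∈ Sbar) (hmul : ∀ a ∈ Sbar, ∀ b ∈ Sbar, a * b ∈ Sbar)
    (hzero : (0 : Rbar) ∉ Sbar)
    (hOre : ∀ r : Rbar, ∀ s ∈ Sbar, ∃ s' ∈ Sbar, ∃ r' : Rbar, s' * r = r' * s)
    (hden : ∀ r : Rbar, ∀ s ∈ Sbar, r * s = 0 → ∃ t ∈ Sbar, t * r = 0)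
    (hassbar : {r : Rbar | ∃ s ∈ Sbar, s * r = 0} = bbar)
    (hass : {r : R | ∃ s ∈ π ⁻¹' Sbar, s * r = 0} = π ⁻¹' bbar) :
    ((1 : R) ∈ π ⁻¹' Sbar ∧ (∀ a ∈ π ⁻¹' Sbar, ∀ b ∈ π ⁻¹' Sbar, a * b ∈ π ⁻¹' Sbar) ∧
      (0 : R) ∉ π ⁻¹' Sbar ∧
      (∀ r : R, ∀ s ∈ π ⁻¹' Sbar, ∃ s' ∈ π ⁻¹' Sbar, ∃ r' : R, s' * r = r' * s) ∧
      (∀ r : R, ∀ s ∈ π ⁻¹' Sbar, r * s = 0 → ∃ t ∈ π ⁻¹' Sbar, t * r = 0)) ∧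
    {r : R | ∃ s ∈ π ⁻¹' Sbar, s * r = 0} = π ⁻¹' bbar ∧
    {r : R | ∃ s ∈ π ⁻¹' Sbar, r * s = 0} ⊆ π ⁻¹' bbar := by
  have hker : ∀ x : R, π x = 0 → ∃ t ∈ π ⁻¹' Sbar, t * x = 0 := fun x hx =>
    hass.symm.subset (show π x ∈ bbar from hx ▸ hb0)
  have hright : {r : R | ∃ s ∈ π ⁻¹' Sbar, r * s = 0} ⊆ π ⁻¹' bbar := by
    rintro r ⟨s, hs, hrs⟩
    exact hassbar.subset (exists_mul_map_eq_zero_of_mul_eq_zero hden hs hrs)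
  refine ⟨⟨by simpa using hone, fun a ha b hb => by simpa using hmul _ ha _ hb,
    by simpa using hzero, fun r s hs => leftOre_preimage_of_ker_torsion hπ hmul hOre hker r hs,
    fun r s hs hrs => hass.symm.subset (hright ⟨s, hs, hrs⟩)⟩, hass, hright⟩

/-- Let `π : R → R̄ = R/a` be the canonical projection onto a quotient
ring (modelled as a surjective ring homomorphism).  Let `b̄` be a (two-sided) ideal of
`R̄`, `b := π⁻¹(b̄)`, `S̄` a multiplicative set of `R̄` and `S := π⁻¹(S̄)`.  If `S̄` is a
left denominator set of `R̄` with `assₗ(S̄) = b̄`, and `assₗ(S) = b`, then `S` is a left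
denominator set of `R` with `assₗ(S) = b`; in particular
`assᵣ(S) = {r | r * s = 0 for some s ∈ S} ⊆ b`. -/
theorem stmt12 {R Rbar : Type*} [Ring R] [Ring Rbar]
    (π : R →+* Rbar) (hπ : Function.Surjective π)
    (bbar : Set Rbar)
    (hb0 : (0 : Rbar) ∈ bbar) (hbadd : ∀ x ∈ bbar, ∀ y ∈ bbar, x + y ∈ bbar)
    (hbneg : ∀ x ∈ bbar, -x ∈ bbar)
    (hbl : ∀ r : Rbar, ∀ x ∈ bbar, r * x ∈ bbar)
    (hbr : ∀ r : Rbar, ∀ x ∈ bbar, x * r ∈ bbar)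
    (Sbar : Set Rbar)
    (hone : (1 : Rbar) ∈ Sbar) (hmul : ∀ a ∈ Sbar, ∀ b ∈ Sbar, a * b ∈ Sbar)
    (hzero : (0 : Rbar) ∉ Sbar)
    (hOre : ∀ r : Rbar, ∀ s ∈ Sbar, ∃ s' ∈ Sbar, ∃ r' : Rbar, s' * r = r' * s)
    (hden : ∀ r : Rbar, ∀ s ∈ Sbar, r * s = 0 → ∃ t ∈ Sbar, t * r = 0)
    (hassbar : {r : Rbar | ∃ s ∈ Sbar, s * r = 0} = bbar)
    (hass : {r : R | ∃ s ∈ π ⁻¹' Sbar, s * r = 0} = π ⁻¹' bbar) :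
    ((1 : R) ∈ π ⁻¹' Sbar ∧ (∀ a ∈ π ⁻¹' Sbar, ∀ b ∈ π ⁻¹' Sbar, a * b ∈ π ⁻¹' Sbar) ∧
      (0 : R) ∉ π ⁻¹' Sbar ∧
      (∀ r : R, ∀ s ∈ π ⁻¹' Sbar, ∃ s' ∈ π ⁻¹' Sbar, ∃ r' : R, s' * r = r' * s) ∧
      (∀ r : R, ∀ s ∈ π ⁻¹' Sbar, r * s = 0 → ∃ t ∈ π ⁻¹' Sbar, t * r = 0)) ∧
    {r : R | ∃ s ∈ π ⁻¹' Sbar, s * r = 0} = π ⁻¹' bbar ∧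
    {r : R | ∃ s ∈ π ⁻¹' Sbar, r * s = 0} ⊆ π ⁻¹' bbar :=
  stmt12_general π hπ bbar hb0 Sbar hone hmul hzero hOre hden hassbar hass
end

section
/- Let R be a ring and let S be a left Ore set of R with ass_l(S) = a (then a is an ideal of R). Then the set S + a := {s + x | s ∈ S, x ∈ a} is a left Ore set of R with ass_l(S + a) = a. -/
/-! `assₗ(S)` is a two-sided ideal: closure under left multiplication and under addition
come from the Ore condition. For an ideal `I ⊆ assₗ(S)`, each `s + y ∈ S + I` has some
`v ∈ S` with `v y = 0`, so `v (s + y) = v s ∈ S`. This excludes `0` from `S + I`, reduces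
the Ore condition for `s + y` to the one for `v s`, and shows that whatever `s + y`
annihilates, `v s` annihilates too. -/

open Pointwise

section

variable {R : Type*} [Ring R]

def leftAss (S : Set R) : Set R := {r | ∃ s ∈ S, s * r = 0}

structure IsLeftOreSet_s13 (S : Set R) : Prop where
  one_mem : (1 : R) ∈ S
  mul_mem : ∀ a ∈ S, ∀ b ∈ S, a * b ∈ S
  zero_notMem : (0 : R) ∉ S
  ore : ∀ r : R, ∀ s ∈ S, ∃ s' ∈ S, ∃ r' : R, s' * r = r' * s

section leftAss

variable {S : Set R} {x : R}

theorem neg_mem_leftAss (hx : x ∈ leftAss S) : -x ∈ leftAss S := by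
  obtain ⟨u, hu, hux⟩ := hx
  exact ⟨u, hu, by rw [mul_neg, hux, neg_zero]⟩

theorem mul_mem_leftAss_right (hx : x ∈ leftAss S) (r : R) : x * r ∈ leftAss S := by
  obtain ⟨u, hu, hux⟩ := hx
  exact ⟨u, hu, by rw [← mul_assoc, hux, zero_mul]⟩

end leftAss

theorem subset_add_ideal {S : Set R} (I : TwoSidedIdeal R) : S ⊆ S + (I : Set R) :=
  fun s hs => ⟨s, hs, 0, I.zero_mem, add_zero s⟩

namespace IsLeftOreSet_s13

variable {S : Set R} (hS : IsLeftOreSet_s13 S)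
include hS

theorem zero_mem_leftAss : (0 : R) ∈ leftAss S := ⟨1, hS.one_mem, mul_zero 1⟩

theorem mul_mem_leftAss_left {x : R} (hx : x ∈ leftAss S) (r : R) : r * x ∈ leftAss S := by
  obtain ⟨u, hu, hux⟩ := hx
  obtain ⟨s', hs', r', h⟩ := hS.ore r u hu
  exact ⟨s', hs', by rw [← mul_assoc, h, mul_assoc, hux, mul_zero]⟩

theorem add_mem_leftAss {x y : R} (hx : x ∈ leftAss S) (hy : y ∈ leftAss S) :
    x + y ∈ leftAss S := by
  obtain ⟨u, hu, hux⟩ := hx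
  obtain ⟨v, hv, hvy⟩ := hy
  obtain ⟨s', hs', r', h⟩ := hS.ore u v hv
  refine ⟨s' * u, hS.mul_mem _ hs' _ hu, ?_⟩
  rw [mul_add, mul_assoc, hux, mul_zero, zero_add, h, mul_assoc, hvy, mul_zero]

def leftAssIdeal : TwoSidedIdeal R :=
  .mk' (leftAss S) hS.zero_mem_leftAss hS.add_mem_leftAss neg_mem_leftAss
    (fun hy => hS.mul_mem_leftAss_left hy _) (fun hx => mul_mem_leftAss_right hx _)

@[simp]
theorem coe_leftAssIdeal : (hS.leftAssIdeal : Set R) = leftAss S :=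
  TwoSidedIdeal.coe_mk' ..

variable (I : TwoSidedIdeal R)

theorem mul_mem_add_ideal :
    ∀ u ∈ S + (I : Set R), ∀ v ∈ S + (I : Set R), u * v ∈ S + (I : Set R) := by
  rintro _ ⟨s, hs, x, hx, rfl⟩ _ ⟨t, ht, y, hy, rfl⟩
  refine ⟨s * t, hS.mul_mem _ hs _ ht, s * y + x * t + x * y, ?_, by noncomm_ring⟩
  exact I.add_mem (I.add_mem (I.mul_mem_left _ _ hy) (I.mul_mem_right _ _ hx))
    (I.mul_mem_left _ _ hy)

variable {I} (hI : (I : Set R) ⊆ leftAss S)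
include hI

theorem exists_mul_add_ideal_mem {s y : R} (hs : s ∈ S) (hy : y ∈ I) :
    ∃ v ∈ S, v * (s + y) = v * s ∧ v * s ∈ S := by
  obtain ⟨v, hv, hvy⟩ := hI hy
  exact ⟨v, hv, by rw [mul_add, hvy, add_zero], hS.mul_mem _ hv _ hs⟩

theorem zero_notMem_add_ideal : (0 : R) ∉ S + (I : Set R) := by
  rintro ⟨s, hs, y, hy, h0 : s + y = 0⟩
  obtain ⟨v, -, hv, hvs⟩ := hS.exists_mul_add_ideal_mem hI hs hy
  rw [h0, mul_zero] at hv
  exact hS.zero_notMem (hv ▸ hvs)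

theorem ore_add_ideal :
    ∀ r : R, ∀ t ∈ S + (I : Set R), ∃ t' ∈ S + (I : Set R), ∃ r' : R, t' * r = r' * t := by
  rintro r _ ⟨s, hs, y, hy, rfl⟩
  obtain ⟨v, -, hv, hvs⟩ := hS.exists_mul_add_ideal_mem hI hs hy
  obtain ⟨s', hs', r', h⟩ := hS.ore r (v * s) hvs
  exact ⟨s', subset_add_ideal I hs', r' * v, by simp only [h, mul_assoc, hv]⟩

theorem add_ideal : IsLeftOreSet_s13 (S + (I : Set R)) :=
  ⟨subset_add_ideal I hS.one_mem, hS.mul_mem_add_ideal I, hS.zero_notMem_add_ideal hI,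
    hS.ore_add_ideal hI⟩

theorem leftAss_add_ideal : leftAss (S + (I : Set R)) = leftAss S := by
  refine subset_antisymm ?_ fun r ⟨u, hu, h⟩ => ⟨u, subset_add_ideal I hu, h⟩
  rintro r ⟨_, ⟨s, hs, y, hy, rfl⟩, htr⟩
  obtain ⟨v, -, hv, hvs⟩ := hS.exists_mul_add_ideal_mem hI hs hy
  exact ⟨v * s, hvs, by rw [← hv, mul_assoc, htr, mul_zero]⟩

end IsLeftOreSet_s13

end

/-- Let `S` be a left Ore set of a ring `R` with
`a = assₗ(S) := {r | s * r = 0 for some s ∈ S}`.  Then `S + a` is a left Ore set of `R`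
with `assₗ(S + a) = a`. -/
theorem stmt13 {R : Type*} [Ring R] (S : Set R)
    (hone : (1 : R) ∈ S) (hmul : ∀ a ∈ S, ∀ b ∈ S, a * b ∈ S) (hzero : (0 : R) ∉ S)
    (hOre : ∀ r : R, ∀ s ∈ S, ∃ s' ∈ S, ∃ r' : R, s' * r = r' * s)
    (a : Set R) (ha : a = {r : R | ∃ s ∈ S, s * r = 0})
    (T : Set R) (hT : T = {x : R | ∃ s ∈ S, ∃ y ∈ a, x = s + y}) :
    (1 : R) ∈ T ∧ (∀ u ∈ T, ∀ v ∈ T, u * v ∈ T) ∧ (0 : R) ∉ T ∧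
    (∀ r : R, ∀ s ∈ T, ∃ s' ∈ T, ∃ r' : R, s' * r = r' * s) ∧
    {r : R | ∃ s ∈ T, s * r = 0} = a := by
  have hS : IsLeftOreSet_s13 S := ⟨hone, hmul, hzero, hOre⟩
  have hI : (hS.leftAssIdeal : Set R) ⊆ leftAss S := hS.coe_leftAssIdeal.le
  have hT' : T = S + (hS.leftAssIdeal : Set R) := by
    ext x
    simp only [hT, ha, hS.coe_leftAssIdeal, leftAss, Set.mem_add, Set.mem_ofPred_eq, eq_comm]
  subst hT'
  obtain ⟨h1, h2, h3, h4⟩ := hS.add_ideal hI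
  exact ⟨h1, h2, h3, h4, (hS.leftAss_add_ideal hI).trans ha.symm⟩
end

section
/- Let R be a subring of a ring R' and let S be a multiplicative set of R such that for each r' ∈ R' there exists s ∈ S with s·r' ∈ R (i.e. the left R-module R'/R is S-torsion). If S is a left Ore set of R' with ass_{l,R'}(S) = a' (an ideal of R'), then S is a left Ore set of R with ass_{l,R}(S) = R ∩ a'. -/
/-! Given a left Ore relation `s' * r = r'' * s` in `R'` with `r ∈ R`, choose `t ∈ S` with
`t * r'' ∈ R`; multiplying on the left by `t` gives the relation `(t * s') * r = (t * r'') * s`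
inside `R`. The annihilator statement is immediate, as `R ∩ a'` is the set of `r ∈ R` killed
on the left by an element of `S`. -/

theorem Subring.exists_left_ore_of_torsion {R' : Type*} [Ring R'] (R : Subring R')
    {S : Set R'} (hmul : ∀ a ∈ S, ∀ b ∈ S, a * b ∈ S)
    (htors : ∀ r' : R', ∃ s ∈ S, s * r' ∈ R)
    (hOre : ∀ r : R', ∀ s ∈ S, ∃ s' ∈ S, ∃ r'' : R', s' * r = r'' * s)
    (r s : R') (hs : s ∈ S) :
    ∃ s' ∈ S, ∃ r'' ∈ R, s' * r = r'' * s := by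
  obtain ⟨s', hs', r'', hOre_rel⟩ := hOre r s hs
  obtain ⟨t, ht, htr''⟩ := htors r''
  exact ⟨t * s', hmul t ht s' hs', t * r'', htr'', by rw [mul_assoc, hOre_rel, mul_assoc]⟩

theorem stmt15_general {R' : Type*} [Ring R'] (R : Subring R') (S : Set R')
    (hmul : ∀ a ∈ S, ∀ b ∈ S, a * b ∈ S)
    (htors : ∀ r' : R', ∃ s ∈ S, s * r' ∈ R)
    (hOre : ∀ r : R', ∀ s ∈ S, ∃ s' ∈ S, ∃ r'' : R', s' * r = r'' * s)
    (a' : Set R') (ha' : a' = {r : R' | ∃ s ∈ S, s * r = 0}) :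
    (∀ r ∈ (R : Set R'), ∀ s ∈ S,
      ∃ s' ∈ S, ∃ r'' ∈ (R : Set R'), s' * r = r'' * s) ∧
    {r : R' | r ∈ R ∧ ∃ s ∈ S, s * r = 0} = (R : Set R') ∩ a' := by
  subst ha'
  exact ⟨fun r _ s hs => R.exists_left_ore_of_torsion hmul htors hOre r s hs, rfl⟩

/-- Let `R` be a subring of a ring `R'` and let `S ⊆ R` be a
multiplicative set such that for each `r' ∈ R'` there exists `s ∈ S` with `s * r' ∈ R`
(the left `R`-module `R'/R` is `S`-torsion).  If `S` is a left Ore set of `R'` with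
`ass_{l,R'}(S) = a'`, then `S` is a left Ore set of `R` with
`ass_{l,R}(S) = R ∩ a'`. -/
theorem stmt15 {R' : Type*} [Ring R'] (R : Subring R') (S : Set R')
    (hSR : S ⊆ (R : Set R'))
    (hone : (1 : R') ∈ S) (hmul : ∀ a ∈ S, ∀ b ∈ S, a * b ∈ S) (hzero : (0 : R') ∉ S)
    (htors : ∀ r' : R', ∃ s ∈ S, s * r' ∈ R)
    (hOre : ∀ r : R', ∀ s ∈ S, ∃ s' ∈ S, ∃ r'' : R', s' * r = r'' * s)
    (a' : Set R') (ha' : a' = {r : R' | ∃ s ∈ S, s * r = 0}) :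
    (∀ r ∈ (R : Set R'), ∀ s ∈ S,
      ∃ s' ∈ S, ∃ r'' ∈ (R : Set R'), s' * r = r'' * s) ∧
    {r : R' | r ∈ R ∧ ∃ s ∈ S, s * r = 0} = (R : Set R') ∩ a' :=
  stmt15_general R S hmul htors hOre a' ha'
end

section
/- Let R be a subring of a ring R' and let S be a multiplicative set of R such that for each r' ∈ R' there exists s ∈ S with s·r' ∈ R (i.e. the left R-module R'/R is S-torsion). If S is a left denominator set of R' with ass_{l,R'}(S) = a' (an ideal of R'), then S is a left denominator set of R with ass_{l,R}(S) = R ∩ a'. -/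
/-! Given an Ore relation `s' * r = r'' * s` in `R'`, torsion supplies `t ∈ S` with
`t * r'' ∈ R`, and `(t * s') * r = (t * r'') * s` is an Ore relation inside `R`.
The denominator condition and the description of `ass_{l,R}(S)` are inherited from `R'`. -/

theorem exists_mem_mul_eq_mem_mul_of_torsion {M : Type*} [Semigroup M] (R S : Set M)
    (hmul : ∀ a ∈ S, ∀ b ∈ S, a * b ∈ S) (htors : ∀ x : M, ∃ s ∈ S, s * x ∈ R)
    {r s s' r'' : M} (hs' : s' ∈ S) (heq : s' * r = r'' * s) :
    ∃ t ∈ S, ∃ x ∈ R, t * r = x * s := by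
  obtain ⟨t, ht, htr⟩ := htors r''
  exact ⟨t * s', hmul t ht s' hs', t * r'', htr, by rw [mul_assoc, heq, mul_assoc]⟩

theorem stmt16_general {R' : Type*} [Ring R'] (R : Subring R') (S : Set R')
    (hmul : ∀ a ∈ S, ∀ b ∈ S, a * b ∈ S)
    (htors : ∀ r' : R', ∃ s ∈ S, s * r' ∈ R)
    (hOre : ∀ r : R', ∀ s ∈ S, ∃ s' ∈ S, ∃ r'' : R', s' * r = r'' * s)
    (hden : ∀ r : R', ∀ s ∈ S, r * s = 0 → ∃ t ∈ S, t * r = 0)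
    (a' : Set R') (ha' : a' = {r : R' | ∃ s ∈ S, s * r = 0}) :
    (∀ r ∈ (R : Set R'), ∀ s ∈ S,
      ∃ s' ∈ S, ∃ r'' ∈ (R : Set R'), s' * r = r'' * s) ∧
    (∀ r ∈ (R : Set R'), ∀ s ∈ S, r * s = 0 → ∃ t ∈ S, t * r = 0) ∧
    {r : R' | r ∈ R ∧ ∃ s ∈ S, s * r = 0} = (R : Set R') ∩ a' := by
  refine ⟨fun r _ s hs => ?_, fun r _ => hden r, by rw [ha']; rfl⟩
  obtain ⟨s', hs', r'', heq⟩ := hOre r s hs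
  exact exists_mem_mul_eq_mem_mul_of_torsion R S hmul htors hs' heq

/-- Let `R` be a subring of a ring `R'` and let `S ⊆ R` be a
multiplicative set such that for each `r' ∈ R'` there exists `s ∈ S` with `s * r' ∈ R`
(the left `R`-module `R'/R` is `S`-torsion).  If `S` is a left denominator set of `R'`
with `ass_{l,R'}(S) = a'`, then `S` is a left denominator set of `R` with
`ass_{l,R}(S) = R ∩ a'`. -/
theorem stmt16 {R' : Type*} [Ring R'] (R : Subring R') (S : Set R')
    (hSR : S ⊆ (R : Set R'))
    (hone : (1 : R') ∈ S) (hmul : ∀ a ∈ S, ∀ b ∈ S, a * b ∈ S) (hzero : (0 : R') ∉ S)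
    (htors : ∀ r' : R', ∃ s ∈ S, s * r' ∈ R)
    (hOre : ∀ r : R', ∀ s ∈ S, ∃ s' ∈ S, ∃ r'' : R', s' * r = r'' * s)
    (hden : ∀ r : R', ∀ s ∈ S, r * s = 0 → ∃ t ∈ S, t * r = 0)
    (a' : Set R') (ha' : a' = {r : R' | ∃ s ∈ S, s * r = 0}) :
    (∀ r ∈ (R : Set R'), ∀ s ∈ S,
      ∃ s' ∈ S, ∃ r'' ∈ (R : Set R'), s' * r = r'' * s) ∧
    (∀ r ∈ (R : Set R'), ∀ s ∈ S, r * s = 0 → ∃ t ∈ S, t * r = 0) ∧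
    {r : R' | r ∈ R ∧ ∃ s ∈ S, s * r = 0} = (R : Set R') ∩ a' :=
  stmt16_general R S hmul htors hOre hden a' ha'
end
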